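/- arXiv:2402.03468 — 5 statements merged into one kernel-verified Lean document; each statement's English description precedes it below -/
import Mathlib

section
/- For every A ∈ ℂ^{n1×n2×N3}, the supremum of Re⟨B, A⟩ over all B ∈ ℂ^{n1×n2×N3} with tensor spectral norm ‖B‖ ≤ 1 equals the sum of all singular values of all frontal slices of A; that is, the dual norm of the tensor spectral norm is the tensor nuclear norm ‖A‖_* = Σ_{k=1}^{N3} Σ_i σ_i(A(:,:,k)). -/
namespace TC

open scoped BigOperators ComplexConjugate
open Matrix

/-- A third-order complex tensor. -/
abbrev Tensor (n1 n2 n3 : ℕ) := Fin n1 → Fin n2 → Fin n3 → ℂ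

/-- The `k`-th frontal slice of a tensor. -/
def slice {n1 n2 n3 : ℕ} (A : Tensor n1 n2 n3) (k : Fin n3) : Matrix (Fin n1) (Fin n2) ℂ :=
  Matrix.of fun i j => A i j k

/-- The natural tensor-tensor product: slice-wise matrix multiplication. -/
noncomputable def tprod {n1 n2 l n3 : ℕ} (A : Tensor n1 n2 n3) (B : Tensor n2 l n3) : Tensor n1 l n3 :=
  fun i j k => ∑ s, A i s k * B s j k

/-- Slice-wise conjugate transpose. -/
noncomputable def hconj {n1 n2 n3 : ℕ} (A : Tensor n1 n2 n3) : Tensor n2 n1 n3 :=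
  fun i j k => (starRingEnd ℂ) (A j i k)

/-- Mode-3 product: apply the matrix `T` to every mode-3 fiber. -/
noncomputable def mode3 {n1 n2 m n : ℕ} (T : Matrix (Fin m) (Fin n) ℂ) (A : Tensor n1 n2 n) :
    Tensor n1 n2 m :=
  fun i j k => ∑ s, T k s * A i j s

/-- Frobenius norm of a tensor. -/
noncomputable def frobNorm {n1 n2 n3 : ℕ} (A : Tensor n1 n2 n3) : ℝ :=
  Real.sqrt (∑ i, ∑ j, ∑ k, ‖A i j k‖ ^ 2)

/-- Entrywise maximum modulus of a tensor. -/
noncomputable def infNorm {n1 n2 n3 : ℕ} (A : Tensor n1 n2 n3) : ℝ :=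
  ⨆ i, ⨆ j, ⨆ k, ‖A i j k‖

/-- `‖A‖_{1↦2}`: largest Frobenius norm of a lateral slice (column). -/
noncomputable def norm1to2 {n1 n2 n3 : ℕ} (A : Tensor n1 n2 n3) : ℝ :=
  ⨆ j, Real.sqrt (∑ i, ∑ k, ‖A i j k‖ ^ 2)

/-- `‖A‖_{2↦∞}`: largest Frobenius norm of a horizontal slice (row). -/
noncomputable def norm2toInf {n1 n2 n3 : ℕ} (A : Tensor n1 n2 n3) : ℝ :=
  ⨆ i, Real.sqrt (∑ j, ∑ k, ‖A i j k‖ ^ 2)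

/-- `‖A‖_{∞,2}`. -/
noncomputable def normInf2 {n1 n2 n3 : ℕ} (A : Tensor n1 n2 n3) : ℝ :=
  max (norm1to2 A) (norm2toInf A)

/-- Singular values of a complex matrix: square roots of the eigenvalues of `Mᴴ * M`. -/
noncomputable def singVals {m n : ℕ} (M : Matrix (Fin m) (Fin n) ℂ) : Fin n → ℝ :=
  fun i => Real.sqrt ((Matrix.isHermitian_conjTranspose_mul_self M).eigenvalues i)

/-- Matrix spectral norm: the largest singular value. -/
noncomputable def specNormMat {m n : ℕ} (M : Matrix (Fin m) (Fin n) ℂ) : ℝ :=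
  ⨆ i, singVals M i

/-- Matrix nuclear norm: sum of the singular values. -/
noncomputable def nucNormMat {m n : ℕ} (M : Matrix (Fin m) (Fin n) ℂ) : ℝ :=
  ∑ i, singVals M i

/-- Tensor spectral norm: the maximum singular value over all frontal slices. -/
noncomputable def tSpecNorm {n1 n2 n3 : ℕ} (A : Tensor n1 n2 n3) : ℝ :=
  ⨆ k, specNormMat (slice A k)

/-- Tensor nuclear norm: the sum of all singular values of all frontal slices. -/
noncomputable def tNucNorm {n1 n2 n3 : ℕ} (A : Tensor n1 n2 n3) : ℝ :=
  ∑ k, nucNormMat (slice A k)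

/-- Smallest singular value. -/
noncomputable def sigmaMin {m n : ℕ} (M : Matrix (Fin m) (Fin n) ℂ) : ℝ :=
  ⨅ i, singVals M i

/-- Condition number `κ(T) = σ_max(T) / σ_min(T)`. -/
noncomputable def kappa {m n : ℕ} (M : Matrix (Fin m) (Fin n) ℂ) : ℝ :=
  specNormMat M / sigmaMin M

/-- Entrywise maximum modulus of a matrix. -/
noncomputable def matInfNorm {m n : ℕ} (M : Matrix (Fin m) (Fin n) ℂ) : ℝ :=
  ⨆ i, ⨆ j, ‖M i j‖

/-- `‖M‖_{1↦2}`: largest `ℓ2` norm of the columns of `M`. -/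
noncomputable def col2Norm {m n : ℕ} (M : Matrix (Fin m) (Fin n) ℂ) : ℝ :=
  ⨆ j, Real.sqrt (∑ i, ‖M i j‖ ^ 2)

/-- Moore–Penrose pseudo-inverse of a matrix of full column rank. -/
noncomputable def pinv {N3 n3 : ℕ} (T : Matrix (Fin N3) (Fin n3) ℂ) :
    Matrix (Fin n3) (Fin N3) ℂ :=
  (Tᴴ * T)⁻¹ * Tᴴ

/-- `ρ(T) = N3 · max(‖T‖_∞², ‖T†‖_∞²)`. -/
noncomputable def rho {N3 n3 : ℕ} (T : Matrix (Fin N3) (Fin n3) ℂ) : ℝ :=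
  (N3 : ℝ) * max (matInfNorm T ^ 2) (matInfNorm (pinv T) ^ 2)

/-- `T` has full column rank. -/
def FullColRank {N3 n3 : ℕ} (T : Matrix (Fin N3) (Fin n3) ℂ) : Prop := T.rank = n3

/-- The sampling operator `S_Ω`. -/
noncomputable def sampleOp {n1 n2 n3 : ℕ} (Ω : Finset (Fin n1 × Fin n2 × Fin n3)) (A : Tensor n1 n2 n3) :
    Tensor n1 n2 n3 :=
  fun i j k => if (i, j, k) ∈ Ω then A i j k else 0

open Classical in
/-- The probability, under Bernoulli(p) sampling of each index independently, that the
random sampled index set satisfies the event `E`. -/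
noncomputable def berProb {ι : Type*} [Fintype ι] (p : ℝ) (E : Finset ι → Prop) : ℝ :=
  ∑ Ω ∈ (Finset.univ : Finset ι).powerset,
    if E Ω then p ^ Ω.card * (1 - p) ^ (Fintype.card ι - Ω.card) else 0

/-- Skinny natural t-SVD of tubal rank `r`: `A = U ⋆ S ⋆ Vᴴ` with slice-wise orthonormal
columns for `U`, `V`, slice-wise diagonal `S` with nonnegative (real) diagonal entries,
and no zero tube on the diagonal of `S` (so `r` is exactly the tubal rank of `A`). -/
structure IsSkinnyTSVD {n1 n2 n3 : ℕ} (A : Tensor n1 n2 n3) (r : ℕ)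
    (U : Tensor n1 r n3) (S : Tensor r r n3) (V : Tensor n2 r n3) : Prop where
  factor : A = tprod U (tprod S (hconj V))
  U_orth : ∀ k : Fin n3, (slice U k)ᴴ * slice U k = 1
  V_orth : ∀ k : Fin n3, (slice V k)ᴴ * slice V k = 1
  S_diag : ∀ (k : Fin n3) (i j : Fin r), i ≠ j → S i j k = 0
  S_real_nonneg : ∀ (k : Fin n3) (i : Fin r), (S i i k).im = 0 ∧ 0 ≤ (S i i k).re
  tubes_ne : ∀ i : Fin r, ∃ k : Fin n3, S i i k ≠ 0

/-- Full natural t-SVD: `A = U ⋆ S ⋆ Vᴴ` with slice-wise unitary `U`, `V` and slice-wise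
diagonal `S` with nonnegative (real) diagonal entries. -/
structure IsFullTSVD {n1 n2 n3 : ℕ} (A : Tensor n1 n2 n3)
    (U : Tensor n1 n1 n3) (S : Tensor n1 n2 n3) (V : Tensor n2 n2 n3) : Prop where
  factor : A = tprod U (tprod S (hconj V))
  U_unitary : ∀ k : Fin n3, (slice U k)ᴴ * slice U k = 1
  V_unitary : ∀ k : Fin n3, (slice V k)ᴴ * slice V k = 1
  S_diag : ∀ (k : Fin n3) (i : Fin n1) (j : Fin n2), (i : ℕ) ≠ (j : ℕ) → S i j k = 0
  S_real_nonneg : ∀ (k : Fin n3) (i : Fin n1) (j : Fin n2), (i : ℕ) = (j : ℕ) →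
    (S i j k).im = 0 ∧ 0 ≤ (S i j k).re

/-- `(S - τ)₊`: replace every diagonal entry `s` of each frontal slice by `max (s - τ) 0`. -/
noncomputable def shrink {n1 n2 n3 : ℕ} (τ : ℝ) (S : Tensor n1 n2 n3) : Tensor n1 n2 n3 :=
  fun i j k => if (i : ℕ) = (j : ℕ) then ((max ((S i j k).re - τ) 0 : ℝ) : ℂ) else S i j k

/-- The projection `P_S` onto the tangent subspace spanned by the singular tensors. -/
noncomputable def PS {n1 n2 n3 r : ℕ} (U : Tensor n1 r n3) (V : Tensor n2 r n3) (Z : Tensor n1 n2 n3) :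
    Tensor n1 n2 n3 :=
  tprod U (tprod (hconj U) Z) + tprod Z (tprod V (hconj V))
    - tprod U (tprod (hconj U) (tprod Z (tprod V (hconj V))))

/-- The complementary projection `P_{S⊥}`. -/
noncomputable def PSperp {n1 n2 n3 r : ℕ} (U : Tensor n1 r n3) (V : Tensor n2 r n3) (Z : Tensor n1 n2 n3) :
    Tensor n1 n2 n3 :=
  Z - PS U V Z

/-- Operator norm of a map between tensor spaces, with respect to Frobenius norms. -/
noncomputable def opNormT {a b c d e f : ℕ} (L : Tensor a b c → Tensor d e f) : ℝ :=
  sSup {x : ℝ | ∃ Z : Tensor a b c, frobNorm Z ≤ 1 ∧ x = frobNorm (L Z)}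

/-- Tensor column basis `ξ_i ∈ ℂ^{n×1×m}`. -/
noncomputable def xiB (n m : ℕ) (i : Fin n) : Tensor n 1 m := fun a _ _ => if a = i then 1 else 0

/-- Tensor frontal-slice basis `ζ_k ∈ ℂ^{1×1×n}`. -/
noncomputable def zetaB (n : ℕ) (k : Fin n) : Tensor 1 1 n := fun _ _ c => if c = k then 1 else 0

/-- Standard inner product of tensors. -/
noncomputable def tinner {n1 n2 n3 : ℕ} (A B : Tensor n1 n2 n3) : ℂ :=
  ∑ i, ∑ j, ∑ k, (starRingEnd ℂ) (A i j k) * B i j k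

/-- Standard basis tensor `e_{ijk}`. -/
noncomputable def eBasis (n1 n2 n3 : ℕ) (i : Fin n1) (j : Fin n2) (k : Fin n3) : Tensor n1 n2 n3 :=
  fun a b c => if a = i ∧ b = j ∧ c = k then 1 else 0

/-- `X` is the unique optimal solution of:
minimize `‖T(X̂)‖_*` subject to `S_Ω(X̂) = S_Ω(X)`. -/
def UniqueSolution {n1 n2 n3 N3 : ℕ} (T : Matrix (Fin N3) (Fin n3) ℂ) (X : Tensor n1 n2 n3)
    (Ω : Finset (Fin n1 × Fin n2 × Fin n3)) : Prop :=
  ∀ Y : Tensor n1 n2 n3, sampleOp Ω Y = sampleOp Ω X → Y ≠ X →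
    tNucNorm (mode3 T X) < tNucNorm (mode3 T Y)

/-- The tensor incoherence conditions with parameters `μ, ν`. -/
structure Incoherent {n1 n2 n3 N3 r : ℕ} (T : Matrix (Fin N3) (Fin n3) ℂ)
    (U : Tensor n1 r N3) (V : Tensor n2 r N3) (μ ν : ℝ) : Prop where
  hU : ∀ i : Fin n1,
    frobNorm (tprod (hconj U) (xiB n1 N3 i)) ≤ Real.sqrt (μ * r * N3 / n1)
  hV : ∀ j : Fin n2,
    frobNorm (tprod (hconj V) (xiB n2 N3 j)) ≤ Real.sqrt (μ * r * N3 / n2)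
  hUT : ∀ (i : Fin n1) (k : Fin n3),
    frobNorm (tprod (tprod (hconj U) (xiB n1 N3 i)) (mode3 T (zetaB n3 k)))
      ≤ Real.sqrt (ν * r / n1) * col2Norm T
  hVT : ∀ (j : Fin n2) (k : Fin n3),
    frobNorm (tprod (tprod (hconj V) (xiB n2 N3 j)) (mode3 T (zetaB n3 k)))
      ≤ Real.sqrt (ν * r / n2) * col2Norm T

/-- The operator `P_S T R_Ω T† P_S − P_S T T† P_S` on `ℂ^{n1×n2×N3}`, `R_Ω = p⁻¹ S_Ω`. -/
noncomputable def isoOp {n1 n2 n3 N3 r : ℕ} (T : Matrix (Fin N3) (Fin n3) ℂ)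
    (U : Tensor n1 r N3) (V : Tensor n2 r N3)
    (Ω : Finset (Fin n1 × Fin n2 × Fin n3)) (p : ℝ) :
    Tensor n1 n2 N3 → Tensor n1 n2 N3 :=
  fun Z =>
    PS U V (mode3 T ((p⁻¹ : ℝ) • sampleOp Ω (mode3 (pinv T) (PS U V Z))))
      - PS U V (mode3 T (mode3 (pinv T) (PS U V Z)))

/-- The dual-certificate conditions (a) `(T T† − T S_Ω T†)ᴴ Y = 0` (the adjoint being
`T̃ Tᴴ − T̃ S_Ω Tᴴ` with `T̃ = (T†)ᴴ`), (b) `‖P_S(Y) − U ⋆ Vᴴ‖_F ≤ p/(8 κ(T))`, and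
(c) `‖P_{S⊥}(Y)‖ ≤ 1/2` in tensor spectral norm. -/
def DualCert {n1 n2 n3 N3 r : ℕ} (T : Matrix (Fin N3) (Fin n3) ℂ)
    (U : Tensor n1 r N3) (V : Tensor n2 r N3)
    (Ω : Finset (Fin n1 × Fin n2 × Fin n3)) (p : ℝ) (Y : Tensor n1 n2 N3) : Prop :=
  (mode3 (pinv T)ᴴ (mode3 Tᴴ Y) - mode3 (pinv T)ᴴ (sampleOp Ω (mode3 Tᴴ Y)) = 0) ∧
  frobNorm (PS U V Y - tprod U (hconj V)) ≤ p / (8 * kappa T) ∧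
  tSpecNorm (PSperp U V Y) ≤ 1 / 2

end TC

/-! For each frontal slice `M`, write `Mᴴ M = V diag(σ²) Vᴴ` with orthonormal eigenvectors `vᵢ`.
Then `tr (Bᴴ M) = ∑ ⟪B vᵢ, M vᵢ⟫` and `‖M vᵢ‖ = σᵢ`, so Cauchy–Schwarz bounds `Re tr (Bᴴ M)` by
`‖B‖ ∑ σᵢ`, where the ℓ²-operator norm `‖B‖` is the largest singular value of `B` because
`‖B‖² = ‖Bᴴ B‖`. The bound is attained by the partial isometry `B = M V diag(σᵢ⁻¹) Vᴴ`
(with `0⁻¹ = 0`, so `B` vanishes on the kernel of `M`). Summing over slices gives the tensor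
statement, the maximiser being assembled slice by slice. -/

open Matrix
open scoped InnerProductSpace Matrix.Norms.L2Operator

lemma Unitary.norm_conjStarAlgAut {S R : Type*} [NormedRing R] [StarRing R] [CStarRing R]
    [SMul S R] [IsScalarTower S R R] [SMulCommClass S R R] (u : unitary R) (x : R) :
    ‖Unitary.conjStarAlgAut S R u x‖ = ‖x‖ := by
  rw [Unitary.conjStarAlgAut_apply, ← Unitary.coe_star, CStarRing.norm_mul_coe_unitary,
    CStarRing.norm_coe_unitary_mul]

namespace Matrix

variable {𝕜 m n : Type*} [RCLike 𝕜] [Fintype m] [Fintype n] [DecidableEq n]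

lemma trace_conjStarAlgAut (u : unitaryGroup n 𝕜) (X : Matrix n n 𝕜) :
    trace (Unitary.conjStarAlgAut 𝕜 _ u X) = trace X := by
  rw [Unitary.conjStarAlgAut_apply, trace_mul_cycle, Unitary.coe_star_mul_self, one_mul]

lemma IsHermitian.l2_opNorm_eq {A : Matrix n n 𝕜} (hA : A.IsHermitian) :
    ‖A‖ = ‖(RCLike.ofReal ∘ hA.eigenvalues : n → 𝕜)‖ := by
  conv_lhs => rw [hA.spectral_theorem]
  rw [Unitary.norm_conjStarAlgAut, l2_opNorm_diagonal]

lemma trace_eq_sum_inner (X : Matrix n n 𝕜) (b : OrthonormalBasis n 𝕜 (EuclideanSpace 𝕜 n)) :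
    X.trace = ∑ i, ⟪b i, toEuclideanLin X (b i)⟫_𝕜 := by
  rw [← LinearMap.trace_eq_sum_inner, toEuclideanLin_eq_toLin_orthonormal, trace_toLin_eq]

lemma norm_toEuclideanLin_le (A : Matrix m n 𝕜) (x : EuclideanSpace 𝕜 n) :
    ‖toEuclideanLin A x‖ ≤ ‖A‖ * ‖x‖ :=
  (toEuclideanLin.trans LinearMap.toContinuousLinearMap A).le_opNorm x

lemma re_trace_conjTranspose_mul_le [DecidableEq m] (B M : Matrix m n 𝕜)
    (b : OrthonormalBasis n 𝕜 (EuclideanSpace 𝕜 n)) :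
    RCLike.re (trace (Bᴴ * M)) ≤ ‖B‖ * ∑ i, ‖toEuclideanLin M (b i)‖ := by
  rw [trace_eq_sum_inner _ b, map_sum, Finset.mul_sum]
  refine Finset.sum_le_sum fun i _ => ?_
  calc RCLike.re ⟪b i, toEuclideanLin (Bᴴ * M) (b i)⟫_𝕜
      = RCLike.re ⟪toEuclideanLin B (b i), toEuclideanLin M (b i)⟫_𝕜 := by
        rw [toLpLin_mul_same, toEuclideanLin_conjTranspose_eq_adjoint, LinearMap.comp_apply,
          LinearMap.adjoint_inner_right]
    _ ≤ ‖toEuclideanLin B (b i)‖ * ‖toEuclideanLin M (b i)‖ := re_inner_le_norm _ _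
    _ ≤ ‖B‖ * ‖toEuclideanLin M (b i)‖ := by
        gcongr
        simpa [b.orthonormal.1 i] using norm_toEuclideanLin_le B (b i)

lemma norm_toEuclideanLin_eigenvectorBasis [DecidableEq m] (M : Matrix m n 𝕜) (i : n) :
    ‖toEuclideanLin M ((isHermitian_conjTranspose_mul_self M).eigenvectorBasis i)‖ =
      √((isHermitian_conjTranspose_mul_self M).eigenvalues i) := by
  set hH := isHermitian_conjTranspose_mul_self M
  set v := hH.eigenvectorBasis i
  have hv : toEuclideanLin (Mᴴ * M) v = hH.eigenvalues i • v :=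
    WithLp.ofLp_injective 2 (hH.mulVec_eigenvectorBasis i)
  have hsq : ‖toEuclideanLin M v‖ ^ 2 = hH.eigenvalues i := by
    rw [@norm_sq_eq_re_inner 𝕜, ← LinearMap.adjoint_inner_right, ← LinearMap.comp_apply,
      ← toEuclideanLin_conjTranspose_eq_adjoint, ← toLpLin_mul_same, hv,
      RCLike.real_smul_eq_coe_smul (K := 𝕜), inner_smul_right,
      inner_self_eq_one_of_norm_eq_one (hH.eigenvectorBasis.orthonormal.1 i), mul_one,
      RCLike.ofReal_re]
  rw [← hsq, Real.sqrt_sq (norm_nonneg _)]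

lemma exists_l2_opNorm_le_one_re_trace_eq (M : Matrix m n 𝕜) :
    ∃ B : Matrix m n 𝕜, ‖B‖ ≤ 1 ∧
      RCLike.re (trace (Bᴴ * M)) =
        ∑ i, √((isHermitian_conjTranspose_mul_self M).eigenvalues i) := by
  set hH := isHermitian_conjTranspose_mul_self M
  set Φ := Unitary.conjStarAlgAut 𝕜 (Matrix n n 𝕜) hH.eigenvectorUnitary
  set ev := hH.eigenvalues
  set d : n → ℝ := fun i => (√(ev i))⁻¹
  set P := Φ (diagonal (RCLike.ofReal ∘ d))
  have hP : Pᴴ = P := by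
    rw [← star_eq_conjTranspose, ← map_star, star_eq_conjTranspose, diagonal_conjTranspose]
    congr 2
    ext i
    simp
  have hPMM : Pᴴ * (Mᴴ * M) = Φ (diagonal (RCLike.ofReal ∘ fun i => d i * ev i)) := by
    rw [hP, show Mᴴ * M = Φ (diagonal (RCLike.ofReal ∘ ev)) from hH.spectral_theorem, ← map_mul,
      diagonal_mul_diagonal]
    simp [Function.comp_def]
  refine ⟨M * P, ?_, ?_⟩
  · have hsq : ‖M * P‖ * ‖M * P‖ ≤ 1 := by
      have hBB : (M * P)ᴴ * (M * P) = Pᴴ * (Mᴴ * M) * P := by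
        simp only [conjTranspose_mul, Matrix.mul_assoc]
      rw [← l2_opNorm_conjTranspose_mul_self, hBB, hPMM, ← map_mul, diagonal_mul_diagonal,
        Unitary.norm_conjStarAlgAut, l2_opNorm_diagonal]
      refine pi_norm_le_iff_of_nonneg zero_le_one |>.mpr fun i => ?_
      have key (x : ℝ) : |(√x)⁻¹ * x * (√x)⁻¹| ≤ 1 := by
        rw [inv_mul_eq_div, Real.div_sqrt, ← div_eq_mul_inv, abs_div,
          abs_of_nonneg (Real.sqrt_nonneg x)]
        exact div_self_le_one _
      simpa [d] using key (ev i)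
    nlinarith [norm_nonneg (M * P)]
  · rw [conjTranspose_mul, Matrix.mul_assoc, hPMM, trace_conjStarAlgAut, trace_diagonal, map_sum]
    simp [d, Real.div_sqrt, ← div_eq_inv_mul]

end Matrix

namespace TC

open Matrix

lemma specNormMat_eq_l2_opNorm {m n : ℕ} (M : Matrix (Fin m) (Fin n) ℂ) :
    specNormMat M = ‖M‖ := by
  have hH := isHermitian_conjTranspose_mul_self M
  have hsq : ‖M‖ ^ 2 = ‖(RCLike.ofReal ∘ hH.eigenvalues : Fin n → ℂ)‖ := by
    rw [sq, ← l2_opNorm_conjTranspose_mul_self, hH.l2_opNorm_eq]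
  have hev (i : Fin n) : ‖(RCLike.ofReal ∘ hH.eigenvalues : Fin n → ℂ) i‖ = singVals M i ^ 2 := by
    simp [singVals, eigenvalues_conjTranspose_mul_self_nonneg, abs_of_nonneg]
  apply le_antisymm
  · refine Real.iSup_le (fun i => ?_) (norm_nonneg M)
    refine (pow_le_pow_iff_left₀ (Real.sqrt_nonneg _) (norm_nonneg M) two_ne_zero).1 ?_
    rw [hsq]
    exact (hev i).symm.trans_le (norm_le_pi_norm _ i)
  · have hs : 0 ≤ specNormMat M := Real.iSup_nonneg fun i => Real.sqrt_nonneg _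
    refine (pow_le_pow_iff_left₀ (norm_nonneg M) hs two_ne_zero).1 ?_
    rw [hsq]
    refine pi_norm_le_iff_of_nonneg (by positivity) |>.2 fun i => ?_
    rw [hev]
    exact pow_le_pow_left₀ (Real.sqrt_nonneg _)
      (le_ciSup (f := singVals M) (Set.finite_range _).bddAbove i) 2

theorem isGreatest_re_trace_nucNormMat {m n : ℕ} (M : Matrix (Fin m) (Fin n) ℂ) :
    IsGreatest {x : ℝ | ∃ B, specNormMat B ≤ 1 ∧ x = (trace (Bᴴ * M)).re} (nucNormMat M) := by
  constructor
  · obtain ⟨B, hB, hBM⟩ := exists_l2_opNorm_le_one_re_trace_eq M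
    exact ⟨B, (specNormMat_eq_l2_opNorm B).trans_le hB, hBM.symm⟩
  · rintro _ ⟨B, hB, rfl⟩
    have hle := re_trace_conjTranspose_mul_le B M
      (isHermitian_conjTranspose_mul_self M).eigenvectorBasis
    simp_rw [norm_toEuclideanLin_eigenvectorBasis] at hle
    rw [specNormMat_eq_l2_opNorm] at hB
    exact hle.trans (mul_le_of_le_one_left (Finset.sum_nonneg fun i _ => Real.sqrt_nonneg _) hB)

lemma tinner_eq_sum_trace {n1 n2 n3 : ℕ} (B A : Tensor n1 n2 n3) :
    tinner B A = ∑ k, trace ((slice B k)ᴴ * slice A k) := by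
  simp only [tinner, trace, diag, mul_apply, conjTranspose_apply, slice, of_apply,
    RCLike.star_def]
  rw [Finset.sum_comm_cycle]
  exact Finset.sum_congr rfl fun k _ => Finset.sum_comm

lemma specNormMat_slice_le_tSpecNorm {n1 n2 n3 : ℕ} (B : Tensor n1 n2 n3) (k : Fin n3) :
    specNormMat (slice B k) ≤ tSpecNorm B :=
  le_ciSup (f := fun k => specNormMat (slice B k)) (Set.finite_range _).bddAbove k

/-- **The dual norm of the tensor spectral norm is the tensor nuclear norm.** -/
theorem dual_of_spectral_is_nuclear {n1 n2 N3 : ℕ} (A : Tensor n1 n2 N3) :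
    sSup {x : ℝ | ∃ B : Tensor n1 n2 N3, tSpecNorm B ≤ 1 ∧ x = (tinner B A).re} =
      tNucNorm A := by
  refine IsGreatest.csSup_eq ⟨?_, ?_⟩
  · choose B hB hBA using fun k => (isGreatest_re_trace_nucNormMat (slice A k)).1
    refine ⟨fun i j k => B k i j, Real.iSup_le hB zero_le_one, ?_⟩
    rw [tinner_eq_sum_trace, Complex.re_sum, tNucNorm]
    exact Finset.sum_congr rfl fun k _ => hBA k
  · rintro _ ⟨B, hB, rfl⟩
    rw [tinner_eq_sum_trace, Complex.re_sum]
    exact Finset.sum_le_sum fun k _ => (isGreatest_re_trace_nucNormMat (slice A k)).2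
      ⟨slice B k, (specNormMat_slice_le_tSpecNorm B k).trans hB, rfl⟩

end TC
end

section
/- Let T ∈ ℂ^{N3×n3} have full column rank, T̃ = (T†)^H, let Ω_1, …, Ω_l ⊆ [n1]×[n2]×[n3] with Ω = Ω_1 ∪ ⋯ ∪ Ω_l, let p_1, …, p_l > 0, and let T(X) = U ⋆ S ⋆ V^H be the skinny t-SVD. Define M_0 = U ⋆ V^H, M_i = P_S(T̃ T^H − p_i⁻¹ T̃ S_{Ω_i} T^H)(M_{i−1}) for i = 1, …, l, and Y = Σ_{i=1}^l (p_i⁻¹ T̃ S_{Ω_i} T^H + I − T̃ T^H)(M_{i−1}). Then (T T† − T S_Ω T†)^H Y = 0. -/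
/-!
Since `T† T = I`, also `Tᴴ T̃ = I`. Hence `Tᴴ` annihilates the `(I − T̃ Tᴴ)` part of every
summand of `Y`, and `Tᴴ Y = ∑ᵢ pᵢ⁻¹ S_{Ωᵢ}(Tᴴ M_{i−1})` is supported on `Ω`, so that
`S_Ω (Tᴴ Y) = Tᴴ Y`.
-/

namespace TC

open scoped BigOperators ComplexConjugate
open Matrix

section Mode3

variable {n1 n2 a b c : ℕ}

lemma mode3_mode3 (A : Matrix (Fin a) (Fin b) ℂ) (B : Matrix (Fin b) (Fin c) ℂ)
    (Z : Tensor n1 n2 c) : mode3 A (mode3 B Z) = mode3 (A * B) Z := by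
  funext i j k
  simp only [mode3, mul_apply, Finset.mul_sum, Finset.sum_mul, mul_assoc]
  exact Finset.sum_comm

lemma mode3_one (Z : Tensor n1 n2 a) : mode3 (1 : Matrix (Fin a) (Fin a) ℂ) Z = Z := by
  funext i j k
  simp [mode3, one_apply]

lemma mode3_mode3_of_mul_eq_one {A : Matrix (Fin a) (Fin b) ℂ} {B : Matrix (Fin b) (Fin a) ℂ}
    (h : A * B = 1) (Z : Tensor n1 n2 a) : mode3 A (mode3 B Z) = Z := by
  rw [mode3_mode3, h, mode3_one]

noncomputable def mode3Lin (A : Matrix (Fin a) (Fin b) ℂ) :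
    Tensor n1 n2 b →ₗ[ℂ] Tensor n1 n2 a where
  toFun := mode3 A
  map_add' X Y := by
    funext i j k
    simp [mode3, mul_add, Finset.sum_add_distrib]
  map_smul' z X := by
    funext i j k
    simp [mode3, Finset.mul_sum, mul_left_comm]

variable (A : Matrix (Fin a) (Fin b) ℂ)

lemma mode3_add (X Y : Tensor n1 n2 b) : mode3 A (X + Y) = mode3 A X + mode3 A Y :=
  map_add (mode3Lin A) X Y

lemma mode3_sub (X Y : Tensor n1 n2 b) : mode3 A (X - Y) = mode3 A X - mode3 A Y :=
  map_sub (mode3Lin A) X Y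

lemma mode3_smul (t : ℝ) (X : Tensor n1 n2 b) : mode3 A (t • X) = t • mode3 A X :=
  LinearMap.map_smul_of_tower (mode3Lin A) t X

lemma mode3_sum {ι : Type*} (s : Finset ι) (f : ι → Tensor n1 n2 b) :
    mode3 A (∑ i ∈ s, f i) = ∑ i ∈ s, mode3 A (f i) :=
  map_sum (mode3Lin A) f s

end Mode3

section Sampling

variable {n1 n2 n3 : ℕ}

noncomputable def sampleOpLin (Ω : Finset (Fin n1 × Fin n2 × Fin n3)) :
    Tensor n1 n2 n3 →ₗ[ℂ] Tensor n1 n2 n3 where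
  toFun := sampleOp Ω
  map_add' X Y := by
    funext i j k
    simp only [sampleOp, Pi.add_apply]
    split_ifs <;> simp
  map_smul' z X := by
    funext i j k
    simp only [sampleOp, Pi.smul_apply]
    split_ifs <;> simp

lemma sampleOp_smul (Ω : Finset (Fin n1 × Fin n2 × Fin n3)) (t : ℝ) (Z : Tensor n1 n2 n3) :
    sampleOp Ω (t • Z) = t • sampleOp Ω Z :=
  LinearMap.map_smul_of_tower (sampleOpLin Ω) t Z

lemma sampleOp_sum (Ω : Finset (Fin n1 × Fin n2 × Fin n3)) {ι : Type*} (s : Finset ι)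
    (f : ι → Tensor n1 n2 n3) : sampleOp Ω (∑ i ∈ s, f i) = ∑ i ∈ s, sampleOp Ω (f i) :=
  map_sum (sampleOpLin Ω) f s

lemma sampleOp_sampleOp_of_subset {Ω Ω' : Finset (Fin n1 × Fin n2 × Fin n3)} (h : Ω' ⊆ Ω)
    (Z : Tensor n1 n2 n3) : sampleOp Ω (sampleOp Ω' Z) = sampleOp Ω' Z := by
  funext i j k
  by_cases hx : (i, j, k) ∈ Ω'
  · simp [sampleOp, hx, h hx]
  · simp [sampleOp, hx]

end Sampling

section PseudoInverse

variable {N3 n3 : ℕ} {T : Matrix (Fin N3) (Fin n3) ℂ}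

open ComplexOrder in
lemma isUnit_conjTranspose_mul_self (hT : FullColRank T) : IsUnit (Tᴴ * T) := by
  have hrank : (Tᴴ * T).rank = n3 := (rank_conjTranspose_mul_self T).trans hT
  rw [← mulVec_surjective_iff_isUnit, ← coe_mulVecLin, ← LinearMap.range_eq_top]
  exact Submodule.eq_top_of_finrank_eq <| by simpa [Matrix.rank] using hrank

lemma pinv_mul_self (hT : FullColRank T) : pinv T * T = 1 := by
  rw [pinv, Matrix.mul_assoc,
    nonsing_inv_mul _ ((isUnit_iff_isUnit_det _).mp (isUnit_conjTranspose_mul_self hT))]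

lemma conjTranspose_mul_conjTranspose_pinv (hT : FullColRank T) : Tᴴ * (pinv T)ᴴ = 1 := by
  rw [← conjTranspose_mul, pinv_mul_self hT, conjTranspose_one]

end PseudoInverse

theorem cert_satisfies_inner_product_condition_general {n1 n2 n3 N3 l : ℕ}
    (T : Matrix (Fin N3) (Fin n3) ℂ) (hT : FullColRank T)
    (Ωs : Fin l → Finset (Fin n1 × Fin n2 × Fin n3))
    (Ω : Finset (Fin n1 × Fin n2 × Fin n3)) (hΩ : Ω = Finset.univ.biUnion Ωs)
    (ps : Fin l → ℝ) (M : ℕ → Tensor n1 n2 N3) (Y : Tensor n1 n2 N3)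
    (hY : Y = ∑ i : Fin l,
      ((ps i)⁻¹ • mode3 (pinv T)ᴴ (sampleOp (Ωs i) (mode3 Tᴴ (M (i : ℕ))))
        + M (i : ℕ) - mode3 (pinv T)ᴴ (mode3 Tᴴ (M (i : ℕ))))) :
    mode3 (pinv T)ᴴ (mode3 Tᴴ Y) - mode3 (pinv T)ᴴ (sampleOp Ω (mode3 Tᴴ Y)) = 0 := by
  have hcancel : ∀ W : Tensor n1 n2 n3, mode3 Tᴴ (mode3 (pinv T)ᴴ W) = W :=
    mode3_mode3_of_mul_eq_one (conjTranspose_mul_conjTranspose_pinv hT)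
  have hsampled : mode3 Tᴴ Y = ∑ i, (ps i)⁻¹ • sampleOp (Ωs i) (mode3 Tᴴ (M i)) := by
    rw [hY, mode3_sum]
    refine Finset.sum_congr rfl fun i _ => ?_
    rw [mode3_sub, mode3_add, mode3_smul, hcancel, hcancel, add_sub_cancel_right]
  have hfixed : sampleOp Ω (mode3 Tᴴ Y) = mode3 Tᴴ Y := by
    rw [hsampled, sampleOp_sum]
    refine Finset.sum_congr rfl fun i _ => ?_
    have hsub : Ωs i ⊆ Ω := hΩ ▸ Finset.subset_biUnion_of_mem Ωs (Finset.mem_univ i)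
    rw [sampleOp_smul, sampleOp_sampleOp_of_subset hsub]
  rw [hfixed, sub_self]

/-- **The constructed certificate satisfies `(T T† − T S_Ω T†)ᴴ Y = 0`** (the adjoint
being `T̃ Tᴴ − T̃ S_Ω Tᴴ` with `T̃ = (T†)ᴴ`). -/
theorem cert_satisfies_inner_product_condition {n1 n2 n3 N3 r l : ℕ}
    (X : Tensor n1 n2 n3) (T : Matrix (Fin N3) (Fin n3) ℂ)
    (U : Tensor n1 r N3) (S : Tensor r r N3) (V : Tensor n2 r N3)
    (hT : FullColRank T) (hsvd : IsSkinnyTSVD (mode3 T X) r U S V)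
    (Ωs : Fin l → Finset (Fin n1 × Fin n2 × Fin n3))
    (Ω : Finset (Fin n1 × Fin n2 × Fin n3)) (hΩ : Ω = Finset.univ.biUnion Ωs)
    (ps : Fin l → ℝ) (hps : ∀ i, 0 < ps i)
    (M : ℕ → Tensor n1 n2 N3) (hM0 : M 0 = tprod U (hconj V))
    (hM : ∀ i : Fin l, M ((i : ℕ) + 1) =
      PS U V (mode3 (pinv T)ᴴ (mode3 Tᴴ (M (i : ℕ))) -
        (ps i)⁻¹ • mode3 (pinv T)ᴴ (sampleOp (Ωs i) (mode3 Tᴴ (M (i : ℕ))))))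
    (Y : Tensor n1 n2 N3)
    (hY : Y = ∑ i : Fin l,
      ((ps i)⁻¹ • mode3 (pinv T)ᴴ (sampleOp (Ωs i) (mode3 Tᴴ (M (i : ℕ))))
        + M (i : ℕ) - mode3 (pinv T)ᴴ (mode3 Tᴴ (M (i : ℕ))))) :
    mode3 (pinv T)ᴴ (mode3 Tᴴ Y) - mode3 (pinv T)ᴴ (sampleOp Ω (mode3 Tᴴ Y)) = 0 :=
  cert_satisfies_inner_product_condition_general T hT Ωs Ω hΩ ps M Y hY

end TC
end

section
/- Let X ∈ ℂ^{n1×n2×n3} and T ∈ ℂ^{N3×n3} with full column rank satisfy the tensor incoherence conditions with parameter ν > 0, and let r be the tubal rank of T(X). Then for every index (i, j, k) ∈ [n1]×[n2]×[n3], ‖P_S(T(e_{ijk}))‖_F² ≤ (ν r (n1+n2)/(n1 n2)) · ‖T‖_{1↦2}², where e_{ijk} ∈ ℂ^{n1×n2×n3} is the tensor with a 1 in position (i, j, k) and 0 elsewhere. -/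
namespace TC

open scoped BigOperators ComplexConjugate
open Matrix

/-! Slice by slice, `P_S Z = U Uᴴ Z + (Z V - U Uᴴ Z V) Vᴴ`, and the two summands are orthogonal
for the Frobenius inner product because `Uᴴ (Z V - U Uᴴ Z V) = 0`. As `U` and `V` have orthonormal
columns, the first summand has norm `‖Uᴴ Z‖` and the second norm `‖(I - U Uᴴ) Z V‖ ≤ ‖Z V‖`, so
`‖P_S Z‖² ≤ ‖Uᴴ ⋆ Z‖² + ‖Z ⋆ V‖²`. For `Z = T(e_{ijk})` the tensors `Uᴴ ⋆ Z` and `Z ⋆ V` carry,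
up to zero padding and conjugation, the entries `conj (U i a c) * T c k` and `T c k * V j a c`,
which are exactly the entries of the tensors bounded by the incoherence conditions. -/

theorem frobNorm_nonneg {n1 n2 n3 : ℕ} (A : Tensor n1 n2 n3) : 0 ≤ frobNorm A :=
  Real.sqrt_nonneg _

theorem frobNorm_sq {n1 n2 n3 : ℕ} (A : Tensor n1 n2 n3) :
    frobNorm A ^ 2 = ∑ i, ∑ j, ∑ k, ‖A i j k‖ ^ 2 :=
  Real.sq_sqrt (by positivity)

@[simp]
theorem slice_tprod {n1 n2 l n3 : ℕ} (A : Tensor n1 n2 n3) (B : Tensor n2 l n3) (k : Fin n3) :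
    slice (tprod A B) k = slice A k * slice B k :=
  rfl

@[simp]
theorem slice_hconj {n1 n2 n3 : ℕ} (A : Tensor n1 n2 n3) (k : Fin n3) :
    slice (hconj A) k = (slice A k)ᴴ :=
  rfl

@[simp]
theorem slice_add {n1 n2 n3 : ℕ} (A B : Tensor n1 n2 n3) (k : Fin n3) :
    slice (A + B) k = slice A k + slice B k :=
  rfl

@[simp]
theorem slice_sub {n1 n2 n3 : ℕ} (A B : Tensor n1 n2 n3) (k : Fin n3) :
    slice (A - B) k = slice A k - slice B k :=
  rfl

section FrobeniusNorm

attribute [local instance] Matrix.frobeniusNormedAddCommGroup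

variable {𝕜 : Type*} [RCLike 𝕜] {l m n : Type*} [Fintype l] [Fintype m] [Fintype n]

theorem frobenius_norm_sq_eq_sum (A : Matrix m n 𝕜) : ‖A‖ ^ 2 = ∑ i, ∑ j, ‖A i j‖ ^ 2 := by
  change ‖WithLp.toLp 2 fun i => WithLp.toLp 2 (A i)‖ ^ 2 = _
  simp only [PiLp.norm_sq_eq_of_L2]

theorem frobenius_norm_sq_eq_re_trace (A : Matrix m n 𝕜) :
    ‖A‖ ^ 2 = RCLike.re (trace (Aᴴ * A)) := by
  rw [frobenius_norm_sq_eq_sum, Finset.sum_comm]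
  simp only [trace, diag, mul_apply, conjTranspose_apply, map_sum, RCLike.star_def,
    RCLike.conj_mul, ← RCLike.ofReal_pow, RCLike.ofReal_re]

theorem frobenius_norm_add_sq_of_conjTranspose_mul_eq_zero {A B : Matrix m n 𝕜}
    (h : Aᴴ * B = 0) : ‖A + B‖ ^ 2 = ‖A‖ ^ 2 + ‖B‖ ^ 2 := by
  have h' : Bᴴ * A = 0 := by rw [← conjTranspose_conjTranspose A, ← conjTranspose_mul, h,
    conjTranspose_zero]
  simp only [frobenius_norm_sq_eq_re_trace, conjTranspose_add, Matrix.add_mul, Matrix.mul_add,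
    h, h', add_zero, zero_add, trace_add, map_add]

theorem frobenius_norm_mul_of_conjTranspose_mul_self [DecidableEq l] {U : Matrix m l 𝕜}
    (hU : Uᴴ * U = 1) (W : Matrix l n 𝕜) : ‖U * W‖ = ‖W‖ := by
  rw [← sq_eq_sq₀ (norm_nonneg _) (norm_nonneg _), frobenius_norm_sq_eq_re_trace,
    frobenius_norm_sq_eq_re_trace, conjTranspose_mul, Matrix.mul_assoc, ← Matrix.mul_assoc Uᴴ,
    hU, Matrix.one_mul]

theorem frobenius_norm_mul_conjTranspose_of_conjTranspose_mul_self [DecidableEq l]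
    {V : Matrix n l 𝕜} (hV : Vᴴ * V = 1) (W : Matrix m l 𝕜) : ‖W * Vᴴ‖ = ‖W‖ := by
  rw [← frobenius_norm_conjTranspose, conjTranspose_mul, conjTranspose_conjTranspose,
    frobenius_norm_mul_of_conjTranspose_mul_self hV, frobenius_norm_conjTranspose]

theorem frobenius_norm_sub_proj_le [DecidableEq l] {U : Matrix m l 𝕜} (hU : Uᴴ * U = 1)
    (W : Matrix m n 𝕜) : ‖W - U * (Uᴴ * W)‖ ≤ ‖W‖ := by
  have horth : (U * (Uᴴ * W))ᴴ * (W - U * (Uᴴ * W)) = 0 := by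
    rw [conjTranspose_mul, Matrix.mul_assoc, Matrix.mul_sub, ← Matrix.mul_assoc Uᴴ U, hU,
      Matrix.one_mul, sub_self, Matrix.mul_zero]
  have hpyth := frobenius_norm_add_sq_of_conjTranspose_mul_eq_zero horth
  rw [add_sub_cancel] at hpyth
  exact le_of_sq_le_sq (hpyth ▸ le_add_of_nonneg_left (sq_nonneg _)) (norm_nonneg _)

theorem frobenius_norm_sq_tangent_le [DecidableEq l] {l' : Type*} [Fintype l'] [DecidableEq l']
    {U : Matrix m l 𝕜} {V : Matrix n l' 𝕜} (hU : Uᴴ * U = 1) (hV : Vᴴ * V = 1)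
    (Z : Matrix m n 𝕜) :
    ‖U * (Uᴴ * Z) + Z * (V * Vᴴ) - U * (Uᴴ * (Z * (V * Vᴴ)))‖ ^ 2
      ≤ ‖Uᴴ * Z‖ ^ 2 + ‖Z * V‖ ^ 2 := by
  have hdecomp : U * (Uᴴ * Z) + Z * (V * Vᴴ) - U * (Uᴴ * (Z * (V * Vᴴ)))
      = U * (Uᴴ * Z) + (Z * V - U * (Uᴴ * (Z * V))) * Vᴴ := by
    simp only [Matrix.sub_mul, Matrix.mul_assoc]
    abel
  have horth : (U * (Uᴴ * Z))ᴴ * ((Z * V - U * (Uᴴ * (Z * V))) * Vᴴ) = 0 := by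
    rw [conjTranspose_mul, Matrix.mul_assoc, ← Matrix.mul_assoc Uᴴ, Matrix.mul_sub,
      ← Matrix.mul_assoc Uᴴ U, hU, Matrix.one_mul, sub_self, Matrix.zero_mul, Matrix.mul_zero]
  calc _ = ‖U * (Uᴴ * Z)‖ ^ 2 + ‖(Z * V - U * (Uᴴ * (Z * V))) * Vᴴ‖ ^ 2 := by
        rw [hdecomp, frobenius_norm_add_sq_of_conjTranspose_mul_eq_zero horth]
    _ = ‖Uᴴ * Z‖ ^ 2 + ‖Z * V - U * (Uᴴ * (Z * V))‖ ^ 2 := by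
        rw [frobenius_norm_mul_of_conjTranspose_mul_self hU,
          frobenius_norm_mul_conjTranspose_of_conjTranspose_mul_self hV]
    _ ≤ ‖Uᴴ * Z‖ ^ 2 + ‖Z * V‖ ^ 2 := by
        gcongr
        exact frobenius_norm_sub_proj_le hU _

theorem frobNorm_sq_eq_sum_slice {n1 n2 n3 : ℕ} (A : Tensor n1 n2 n3) :
    frobNorm A ^ 2 = ∑ k, ‖slice A k‖ ^ 2 := by
  simp only [frobNorm_sq, frobenius_norm_sq_eq_sum, slice, of_apply]
  exact (Finset.sum_congr rfl fun _ _ => Finset.sum_comm).trans Finset.sum_comm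

theorem frobNorm_sq_PS_le {n1 n2 n3 r : ℕ} {U : Tensor n1 r n3} {V : Tensor n2 r n3}
    (hU : ∀ k, (slice U k)ᴴ * slice U k = 1) (hV : ∀ k, (slice V k)ᴴ * slice V k = 1)
    (Z : Tensor n1 n2 n3) :
    frobNorm (PS U V Z) ^ 2 ≤ frobNorm (tprod (hconj U) Z) ^ 2 + frobNorm (tprod Z V) ^ 2 := by
  simp only [frobNorm_sq_eq_sum_slice, ← Finset.sum_add_distrib]
  gcongr with k
  simpa [PS] using frobenius_norm_sq_tangent_le (hU k) (hV k) (slice Z k)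

end FrobeniusNorm

theorem frobNorm_sq_of_lateral_slice {n1 n2 n3 : ℕ} (j : Fin n2) (W : Fin n1 → Fin n3 → ℂ) :
    frobNorm (fun a b c => if b = j then W a c else 0 : Tensor n1 n2 n3) ^ 2
      = ∑ a, ∑ c, ‖W a c‖ ^ 2 := by
  simp [frobNorm_sq, apply_ite (‖·‖ ^ 2 : ℂ → ℝ), Finset.sum_ite_irrel]

theorem frobNorm_sq_of_horizontal_slice {n1 n2 n3 : ℕ} (i : Fin n1) (W : Fin n2 → Fin n3 → ℂ) :
    frobNorm (fun a b c => if a = i then W b c else 0 : Tensor n1 n2 n3) ^ 2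
      = ∑ b, ∑ c, ‖W b c‖ ^ 2 := by
  simp [frobNorm_sq, apply_ite (‖·‖ ^ 2 : ℂ → ℝ), Finset.sum_ite_irrel]

theorem frobNorm_sq_of_width_one {n m : ℕ} (A : Tensor n 1 m) :
    frobNorm A ^ 2 = ∑ a, ∑ c, ‖A a 0 c‖ ^ 2 := by
  simp [frobNorm_sq]

theorem mode3_eBasis {n1 n2 n3 N3 : ℕ} (T : Matrix (Fin N3) (Fin n3) ℂ)
    (i : Fin n1) (j : Fin n2) (k : Fin n3) :
    mode3 T (eBasis n1 n2 n3 i j k) = fun a b c => if a = i ∧ b = j then T c k else 0 := by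
  funext a b c
  by_cases h : a = i ∧ b = j
  · simp [mode3, eBasis, h]
  · simp [mode3, eBasis, h, ← and_assoc]

theorem tprod_hconj_mode3_eBasis {n1 n2 n3 N3 r : ℕ} (T : Matrix (Fin N3) (Fin n3) ℂ)
    (U : Tensor n1 r N3) (i : Fin n1) (j : Fin n2) (k : Fin n3) :
    tprod (hconj U) (mode3 T (eBasis n1 n2 n3 i j k))
      = fun a b c => if b = j then conj (U i a c) * T c k else 0 := by
  funext a b c
  by_cases hb : b = j <;> simp [tprod, hconj, mode3_eBasis, hb]

theorem tprod_mode3_eBasis {n1 n2 n3 N3 r : ℕ} (T : Matrix (Fin N3) (Fin n3) ℂ)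
    (V : Tensor n2 r N3) (i : Fin n1) (j : Fin n2) (k : Fin n3) :
    tprod (mode3 T (eBasis n1 n2 n3 i j k)) V
      = fun a b c => if a = i then T c k * V j b c else 0 := by
  funext a b c
  by_cases ha : a = i <;> simp [tprod, mode3_eBasis, ha]

theorem tprod_tprod_hconj_xiB_mode3_zetaB {n n3 N3 r : ℕ} (T : Matrix (Fin N3) (Fin n3) ℂ)
    (U : Tensor n r N3) (i : Fin n) (k : Fin n3) :
    tprod (tprod (hconj U) (xiB n N3 i)) (mode3 T (zetaB n3 k))
      = fun a _ c => conj (U i a c) * T c k := by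
  funext a z c
  simp [tprod, hconj, xiB, zetaB, mode3, mul_ite, Finset.sum_ite_eq']

theorem frobNorm_tprod_hconj_mode3_eBasis {n1 n2 n3 N3 r : ℕ} (T : Matrix (Fin N3) (Fin n3) ℂ)
    (U : Tensor n1 r N3) (i : Fin n1) (j : Fin n2) (k : Fin n3) :
    frobNorm (tprod (hconj U) (mode3 T (eBasis n1 n2 n3 i j k)))
      = frobNorm (tprod (tprod (hconj U) (xiB n1 N3 i)) (mode3 T (zetaB n3 k))) := by
  rw [← sq_eq_sq₀ (frobNorm_nonneg _) (frobNorm_nonneg _), tprod_hconj_mode3_eBasis,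
    frobNorm_sq_of_lateral_slice, frobNorm_sq_of_width_one, tprod_tprod_hconj_xiB_mode3_zetaB]

theorem frobNorm_tprod_mode3_eBasis {n1 n2 n3 N3 r : ℕ} (T : Matrix (Fin N3) (Fin n3) ℂ)
    (V : Tensor n2 r N3) (i : Fin n1) (j : Fin n2) (k : Fin n3) :
    frobNorm (tprod (mode3 T (eBasis n1 n2 n3 i j k)) V)
      = frobNorm (tprod (tprod (hconj V) (xiB n2 N3 j)) (mode3 T (zetaB n3 k))) := by
  rw [← sq_eq_sq₀ (frobNorm_nonneg _) (frobNorm_nonneg _), tprod_mode3_eBasis,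
    frobNorm_sq_of_horizontal_slice, frobNorm_sq_of_width_one, tprod_tprod_hconj_xiB_mode3_zetaB]
  simp only [norm_mul, RCLike.norm_conj, mul_comm]

theorem bound_F_norm_by_incoherence_general {n1 n2 n3 N3 r : ℕ}
    (X : Tensor n1 n2 n3) (T : Matrix (Fin N3) (Fin n3) ℂ)
    (U : Tensor n1 r N3) (S : Tensor r r N3) (V : Tensor n2 r N3) (ν : ℝ)
    (hsvd : IsSkinnyTSVD (mode3 T X) r U S V) (hν : 0 < ν)
    (hUT : ∀ (i : Fin n1) (k : Fin n3),
      frobNorm (tprod (tprod (hconj U) (xiB n1 N3 i)) (mode3 T (zetaB n3 k)))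
        ≤ Real.sqrt (ν * r / n1) * col2Norm T)
    (hVT : ∀ (j : Fin n2) (k : Fin n3),
      frobNorm (tprod (tprod (hconj V) (xiB n2 N3 j)) (mode3 T (zetaB n3 k)))
        ≤ Real.sqrt (ν * r / n2) * col2Norm T) :
    ∀ (i : Fin n1) (j : Fin n2) (k : Fin n3),
      frobNorm (PS U V (mode3 T (eBasis n1 n2 n3 i j k))) ^ 2 ≤
        ν * r * ((n1 : ℝ) + n2) / ((n1 : ℝ) * n2) * col2Norm T ^ 2 := by
  intro i j k
  have hn1 : (0 : ℝ) < n1 := by exact_mod_cast i.pos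
  have hn2 : (0 : ℝ) < n2 := by exact_mod_cast j.pos
  have sq_le {x a : ℝ} (hx : 0 ≤ x) (ha : 0 ≤ a) (h : x ≤ √a * col2Norm T) :
      x ^ 2 ≤ a * col2Norm T ^ 2 := by
    simpa only [mul_pow, Real.sq_sqrt ha] using pow_le_pow_left₀ hx h 2
  have hleft := sq_le (frobNorm_nonneg _) (by positivity)
    ((frobNorm_tprod_hconj_mode3_eBasis T U i j k).trans_le (hUT i k))
  have hright := sq_le (frobNorm_nonneg _) (by positivity)
    ((frobNorm_tprod_mode3_eBasis T V i j k).trans_le (hVT j k))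
  calc frobNorm (PS U V (mode3 T (eBasis n1 n2 n3 i j k))) ^ 2
      ≤ frobNorm (tprod (hconj U) (mode3 T (eBasis n1 n2 n3 i j k))) ^ 2
        + frobNorm (tprod (mode3 T (eBasis n1 n2 n3 i j k)) V) ^ 2 :=
        frobNorm_sq_PS_le hsvd.U_orth hsvd.V_orth _
    _ ≤ ν * r / n1 * col2Norm T ^ 2 + ν * r / n2 * col2Norm T ^ 2 := add_le_add hleft hright
    _ = ν * r * ((n1 : ℝ) + n2) / ((n1 : ℝ) * n2) * col2Norm T ^ 2 := by
        field_simp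
        ring

/-- **Frobenius norm bound of `P_S(T(e_{ijk}))` via the incoherence conditions.** -/
theorem bound_F_norm_by_incoherence {n1 n2 n3 N3 r : ℕ}
    (X : Tensor n1 n2 n3) (T : Matrix (Fin N3) (Fin n3) ℂ)
    (U : Tensor n1 r N3) (S : Tensor r r N3) (V : Tensor n2 r N3) (ν : ℝ)
    (hT : FullColRank T) (hsvd : IsSkinnyTSVD (mode3 T X) r U S V) (hν : 0 < ν)
    (hUT : ∀ (i : Fin n1) (k : Fin n3),
      frobNorm (tprod (tprod (hconj U) (xiB n1 N3 i)) (mode3 T (zetaB n3 k)))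
        ≤ Real.sqrt (ν * r / n1) * col2Norm T)
    (hVT : ∀ (j : Fin n2) (k : Fin n3),
      frobNorm (tprod (tprod (hconj V) (xiB n2 N3 j)) (mode3 T (zetaB n3 k)))
        ≤ Real.sqrt (ν * r / n2) * col2Norm T) :
    ∀ (i : Fin n1) (j : Fin n2) (k : Fin n3),
      frobNorm (PS U V (mode3 T (eBasis n1 n2 n3 i j k))) ^ 2 ≤
        ν * r * ((n1 : ℝ) + n2) / ((n1 : ℝ) * n2) * col2Norm T ^ 2 :=
  bound_F_norm_by_incoherence_general X T U S V ν hsvd hν hUT hVT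

end TC
end

section
/- Let T ∈ ℂ^{N3×n3} have full column rank and let U ∈ ℂ^{n1×r×N3}, V ∈ ℂ^{n2×r×N3} be the singular tensors of the skinny t-SVD of T(X) for some X ∈ ℂ^{n1×n2×n3} of tubal rank r in the transform domain. If max_i ‖U^H ⋆ ξ_i‖_F ≤ √(μ r N3 / n1) and max_j ‖V^H ⋆ ξ_j‖_F ≤ √(μ r N3 / n2), then the entrywise bound ‖(U ⋆ V^H) ×₃ T^H‖_∞ ≤ ‖T‖_∞ · μ r (n1+n2) N3 / (2 n1 n2) holds, where ‖T‖_∞ is the entrywise maximum modulus of the matrix T. -/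
namespace TC

open scoped BigOperators ComplexConjugate
open Matrix

/-!
Each entry of `(U ⋆ Vᴴ) ×₃ Tᴴ` is a combination of the mode-3 fiber of `U ⋆ Vᴴ` with
coefficients bounded by `‖T‖_∞`, and the `ℓ¹` norm of that fiber is at most the product of the
Frobenius norms of the `i`-th horizontal slice of `U` and the `j`-th one of `V` (Cauchy–Schwarz
over the pairs (tube, frontal slice)). These are exactly `‖Uᴴ ⋆ ξ_i‖_F` and `‖Vᴴ ⋆ ξ_j‖_F`, and
AM–GM turns the product of their bounds `√(μrN₃/n₁) · √(μrN₃/n₂)` into the claimed constant.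
AM–GM needs `μ r N₃ ≥ 0`, which holds because the orthonormal columns of `U` make some
`‖Uᴴ ⋆ ξ_i‖_F` positive as soon as `r N₃ > 0`.
-/

section MatInfNorm

variable {m n : ℕ}

lemma norm_le_matInfNorm (M : Matrix (Fin m) (Fin n) ℂ) (i : Fin m) (j : Fin n) :
    ‖M i j‖ ≤ matInfNorm M :=
  (le_ciSup (Finite.bddAbove_range fun j => ‖M i j‖) j).trans
    (le_ciSup (Finite.bddAbove_range fun i => ⨆ j, ‖M i j‖) i)

lemma matInfNorm_nonneg (M : Matrix (Fin m) (Fin n) ℂ) : 0 ≤ matInfNorm M :=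
  Real.iSup_nonneg fun _ => Real.iSup_nonneg fun _ => norm_nonneg _

lemma matInfNorm_conjTranspose_le (M : Matrix (Fin m) (Fin n) ℂ) :
    matInfNorm Mᴴ ≤ matInfNorm M :=
  Real.iSup_le (fun i => Real.iSup_le (fun j => by simpa using norm_le_matInfNorm M j i)
    (matInfNorm_nonneg M)) (matInfNorm_nonneg M)

lemma matInfNorm_conjTranspose (M : Matrix (Fin m) (Fin n) ℂ) :
    matInfNorm Mᴴ = matInfNorm M :=
  (matInfNorm_conjTranspose_le M).antisymm (by simpa using matInfNorm_conjTranspose_le Mᴴ)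

end MatInfNorm

section TensorEntries

variable {n1 n2 n3 r m : ℕ}

lemma infNorm_le_of_forall_norm_le {A : Tensor n1 n2 n3} {b : ℝ} (hb : 0 ≤ b)
    (h : ∀ i j k, ‖A i j k‖ ≤ b) : infNorm A ≤ b :=
  Real.iSup_le (fun i => Real.iSup_le (fun j => Real.iSup_le (h i j) hb) hb) hb

lemma norm_mode3_le (T : Matrix (Fin m) (Fin n3) ℂ) (A : Tensor n1 n2 n3)
    (i : Fin n1) (j : Fin n2) (k : Fin m) :
    ‖mode3 T A i j k‖ ≤ matInfNorm T * ∑ s, ‖A i j s‖ :=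
  calc ‖mode3 T A i j k‖ ≤ ∑ s, ‖T k s‖ * ‖A i j s‖ := by
        simpa only [mode3, norm_mul] using norm_sum_le Finset.univ fun s => T k s * A i j s
    _ ≤ ∑ s, matInfNorm T * ‖A i j s‖ := by
        gcongr with s; exact norm_le_matInfNorm T k s
    _ = matInfNorm T * ∑ s, ‖A i j s‖ := (Finset.mul_sum _ _ _).symm

lemma norm_tprod_hconj_le (U : Tensor n1 r n3) (V : Tensor n2 r n3)
    (i : Fin n1) (j : Fin n2) (s : Fin n3) :
    ‖tprod U (hconj V) i j s‖ ≤ ∑ t, ‖U i t s‖ * ‖V j t s‖ := by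
  simpa only [tprod, hconj, norm_mul, Complex.norm_conj] using
    norm_sum_le Finset.univ fun t => U i t s * hconj V t j s

lemma frobNorm_tprod_hconj_xiB (U : Tensor n1 r n3) (i : Fin n1) :
    frobNorm (tprod (hconj U) (xiB n1 n3 i)) = √(∑ t, ∑ k, ‖U i t k‖ ^ 2) := by
  simp [frobNorm, tprod, hconj, xiB, mul_ite]

lemma sum_norm_tprod_hconj_le (U : Tensor n1 r n3) (V : Tensor n2 r n3)
    (i : Fin n1) (j : Fin n2) :
    ∑ s, ‖tprod U (hconj V) i j s‖ ≤
      frobNorm (tprod (hconj U) (xiB n1 n3 i)) * frobNorm (tprod (hconj V) (xiB n2 n3 j)) := by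
  rw [frobNorm_tprod_hconj_xiB, frobNorm_tprod_hconj_xiB]
  calc ∑ s, ‖tprod U (hconj V) i j s‖ ≤ ∑ s, ∑ t, ‖U i t s‖ * ‖V j t s‖ :=
        Finset.sum_le_sum fun s _ => norm_tprod_hconj_le U V i j s
    _ = ∑ p : Fin r × Fin n3, ‖U i p.1 p.2‖ * ‖V j p.1 p.2‖ := by
        rw [Fintype.sum_prod_type, Finset.sum_comm]
    _ ≤ √(∑ p : Fin r × Fin n3, ‖U i p.1 p.2‖ ^ 2) * √(∑ p : Fin r × Fin n3, ‖V j p.1 p.2‖ ^ 2) :=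
        Real.sum_mul_le_sqrt_mul_sqrt _ _ _
    _ = √(∑ t, ∑ k, ‖U i t k‖ ^ 2) * √(∑ t, ∑ k, ‖V j t k‖ ^ 2) := by
        rw [Fintype.sum_prod_type, Fintype.sum_prod_type]

end TensorEntries

lemma ne_zero_of_conjTranspose_mul_self_eq_one {R : Type*} [Semiring R] [StarRing R]
    [Nontrivial R] {ι κ : Type*} [Fintype ι] [Fintype κ] [DecidableEq κ] [Nonempty κ]
    {A : Matrix ι κ R} (h : Aᴴ * A = 1) : A ≠ 0 := by
  rintro rfl
  simp at h

section Incoherence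

variable {n r N : ℕ}

lemma exists_frobNorm_tprod_hconj_xiB_pos {U : Tensor n r N}
    (hU : ∀ k, (slice U k)ᴴ * slice U k = 1) (hr : 0 < r) (hN : 0 < N) :
    ∃ i, 0 < frobNorm (tprod (hconj U) (xiB n N i)) := by
  have : Nonempty (Fin r) := ⟨⟨0, hr⟩⟩
  obtain ⟨i, t, hit⟩ : ∃ i t, slice U ⟨0, hN⟩ i t ≠ 0 := by
    by_contra! h
    exact ne_zero_of_conjTranspose_mul_self_eq_one (hU _) (Matrix.ext h)
  refine ⟨i, ?_⟩
  rw [frobNorm_tprod_hconj_xiB, Real.sqrt_pos]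
  calc (0 : ℝ) < ‖U i t ⟨0, hN⟩‖ ^ 2 := pow_pos (norm_pos_iff.mpr hit) 2
    _ ≤ ∑ k, ‖U i t k‖ ^ 2 :=
        Finset.single_le_sum (f := fun k => ‖U i t k‖ ^ 2) (fun _ _ => by positivity)
          (Finset.mem_univ _)
    _ ≤ ∑ t, ∑ k, ‖U i t k‖ ^ 2 :=
        Finset.single_le_sum (f := fun t => ∑ k, ‖U i t k‖ ^ 2) (fun _ _ => by positivity)
          (Finset.mem_univ _)

lemma incoherence_const_nonneg {U : Tensor n r N} {μ : ℝ}
    (hUorth : ∀ k, (slice U k)ᴴ * slice U k = 1)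
    (hU : ∀ i : Fin n, frobNorm (tprod (hconj U) (xiB n N i)) ≤ √(μ * r * N / n)) :
    0 ≤ μ * r * N := by
  rcases Nat.eq_zero_or_pos r with rfl | hr
  · simp
  rcases Nat.eq_zero_or_pos N with rfl | hN
  · simp
  obtain ⟨i, hi⟩ := exists_frobNorm_tprod_hconj_xiB_pos hUorth hr hN
  have hdiv : 0 < μ * r * N / n := Real.sqrt_pos.mp (hi.trans_le (hU i))
  exact le_of_not_gt fun hneg =>
    hdiv.not_ge (div_nonpos_of_nonpos_of_nonneg hneg.le n.cast_nonneg)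

end Incoherence

lemma sqrt_mul_sqrt_le_add_div_two {x y : ℝ} (hx : 0 ≤ x) (hy : 0 ≤ y) :
    √x * √y ≤ (x + y) / 2 := by
  have := two_mul_le_add_sq √x √y
  rw [Real.sq_sqrt hx, Real.sq_sqrt hy] at this
  linarith

lemma sqrt_div_mul_sqrt_div_le {c a b : ℝ} (hc : 0 ≤ c) (ha : 0 ≤ a) (hb : 0 ≤ b) :
    √(c / a) * √(c / b) ≤ c * (a + b) / (2 * (a * b)) := by
  rcases ha.eq_or_lt with rfl | ha
  · simp
  rcases hb.eq_or_lt with rfl | hb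
  · simp
  calc √(c / a) * √(c / b) ≤ (c / a + c / b) / 2 :=
        sqrt_mul_sqrt_le_add_div_two (by positivity) (by positivity)
    _ = c * (a + b) / (2 * (a * b)) := by field_simp; ring

theorem infNorm_TH_UVH_bound_general {n1 n2 n3 N3 r : ℕ}
    (X : Tensor n1 n2 n3) (T : Matrix (Fin N3) (Fin n3) ℂ)
    (U : Tensor n1 r N3) (S : Tensor r r N3) (V : Tensor n2 r N3) (μ : ℝ)
    (hsvd : IsSkinnyTSVD (mode3 T X) r U S V)
    (hU : ∀ i : Fin n1,
      frobNorm (tprod (hconj U) (xiB n1 N3 i)) ≤ Real.sqrt (μ * r * N3 / n1))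
    (hV : ∀ j : Fin n2,
      frobNorm (tprod (hconj V) (xiB n2 N3 j)) ≤ Real.sqrt (μ * r * N3 / n2)) :
    infNorm (mode3 Tᴴ (tprod U (hconj V))) ≤
      matInfNorm T * (μ * r * ((n1 : ℝ) + n2) * N3 / (2 * ((n1 : ℝ) * n2))) := by
  set c : ℝ := μ * r * N3
  have hc : 0 ≤ c := incoherence_const_nonneg hsvd.U_orth hU
  have hT : 0 ≤ matInfNorm T := matInfNorm_nonneg T
  have entry (i j k) : ‖mode3 Tᴴ (tprod U (hconj V)) i j k‖ ≤
      matInfNorm T * (√(c / n1) * √(c / n2)) :=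
    calc ‖mode3 Tᴴ (tprod U (hconj V)) i j k‖
        ≤ matInfNorm Tᴴ * ∑ s, ‖tprod U (hconj V) i j s‖ := norm_mode3_le _ _ i j k
      _ ≤ matInfNorm T * (frobNorm (tprod (hconj U) (xiB n1 N3 i)) *
            frobNorm (tprod (hconj V) (xiB n2 N3 j))) := by
          rw [matInfNorm_conjTranspose]; gcongr; exact sum_norm_tprod_hconj_le U V i j
      _ ≤ matInfNorm T * (√(c / n1) * √(c / n2)) := by
          gcongr
          · exact Real.sqrt_nonneg _
          · exact hU i
          · exact hV j
  calc infNorm (mode3 Tᴴ (tprod U (hconj V))) ≤ matInfNorm T * (√(c / n1) * √(c / n2)) :=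
        infNorm_le_of_forall_norm_le (by positivity) entry
    _ ≤ matInfNorm T * (c * (n1 + n2) / (2 * (n1 * n2))) := by
        gcongr; exact sqrt_div_mul_sqrt_div_le hc n1.cast_nonneg n2.cast_nonneg
    _ = matInfNorm T * (μ * r * ((n1 : ℝ) + n2) * N3 / (2 * ((n1 : ℝ) * n2))) := by ring

/-- **Entrywise bound of `Tᴴ(U ⋆ Vᴴ)` via the incoherence conditions.** -/
theorem infNorm_TH_UVH_bound {n1 n2 n3 N3 r : ℕ}
    (X : Tensor n1 n2 n3) (T : Matrix (Fin N3) (Fin n3) ℂ)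
    (U : Tensor n1 r N3) (S : Tensor r r N3) (V : Tensor n2 r N3) (μ : ℝ)
    (hT : FullColRank T) (hsvd : IsSkinnyTSVD (mode3 T X) r U S V)
    (hU : ∀ i : Fin n1,
      frobNorm (tprod (hconj U) (xiB n1 N3 i)) ≤ Real.sqrt (μ * r * N3 / n1))
    (hV : ∀ j : Fin n2,
      frobNorm (tprod (hconj V) (xiB n2 N3 j)) ≤ Real.sqrt (μ * r * N3 / n2)) :
    infNorm (mode3 Tᴴ (tprod U (hconj V))) ≤
      matInfNorm T * (μ * r * ((n1 : ℝ) + n2) * N3 / (2 * ((n1 : ℝ) * n2))) :=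
  infNorm_TH_UVH_bound_general X T U S V μ hsvd hU hV

end TC
end

section
/- Let T ∈ ℂ^{N3×n3} have full column rank and let U ∈ ℂ^{n1×r×N3}, V ∈ ℂ^{n2×r×N3} be the singular tensors of the skinny t-SVD of T(X) for some X ∈ ℂ^{n1×n2×n3} of tubal rank r in the transform domain. If max_i ‖U^H ⋆ ξ_i‖_F ≤ √(μ r N3 / n1) and max_j ‖V^H ⋆ ξ_j‖_F ≤ √(μ r N3 / n2), then ‖(U ⋆ V^H) ×₃ T^H‖_{∞,2} ≤ ‖T‖ · √(μ r (n1+n2) N3 / (n1 n2)), where ‖T‖ is the matrix spectral norm of T. -/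
namespace TC

open scoped BigOperators ComplexConjugate
open Matrix

/-! Applying `Tᴴ` to every tube multiplies the norm of each lateral and horizontal slice by at
most `‖Tᴴ‖ = ‖T‖`, which is at most the largest singular value of `T`. Since `U` and `V` have
orthonormal columns slice by slice, the rows of `U ⋆ Vᴴ` have the norms of the rows of `U`, and
its columns those of the rows of `V`; these are `‖Uᴴ ⋆ ξ_i‖_F` and `‖Vᴴ ⋆ ξ_j‖_F`, and both
incoherence bounds lie below `√(μrN₃/n₁ + μrN₃/n₂)`. -/

open scoped Matrix.Norms.L2Operator

lemma specNormMat_nonneg {m n : ℕ} (M : Matrix (Fin m) (Fin n) ℂ) : 0 ≤ specNormMat M :=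
  Real.iSup_nonneg fun _ => Real.sqrt_nonneg _

lemma eigenvalues_conjTranspose_mul_self_le_sq {m n : ℕ} (M : Matrix (Fin m) (Fin n) ℂ)
    (i : Fin n) :
    (isHermitian_conjTranspose_mul_self M).eigenvalues i ≤ specNormMat M ^ 2 :=
  (Real.sqrt_le_iff.mp (le_ciSup (Finite.bddAbove_range (singVals M)) i)).2

lemma l2_opNorm_le_specNormMat {m n : ℕ} (M : Matrix (Fin m) (Fin n) ℂ) :
    ‖M‖ ≤ specNormMat M := by
  have hA := isHermitian_conjTranspose_mul_self M
  have hdiag : ‖Mᴴ * M‖ = ‖diagonal (RCLike.ofReal ∘ hA.eigenvalues : Fin n → ℂ)‖ := by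
    conv_lhs => rw [hA.spectral_theorem, Unitary.conjStarAlgAut_apply]
    rw [← Unitary.coe_star, CStarRing.norm_mul_coe_unitary, CStarRing.norm_coe_unitary_mul]
  have hsq : ‖M‖ * ‖M‖ ≤ specNormMat M * specNormMat M := by
    rw [← l2_opNorm_conjTranspose_mul_self, hdiag, l2_opNorm_diagonal, ← sq]
    refine (pi_norm_le_iff_of_nonneg (sq_nonneg _)).mpr fun i => ?_
    rw [Function.comp_apply, RCLike.norm_ofReal,
      abs_of_nonneg (eigenvalues_conjTranspose_mul_self_nonneg M i)]
    exact eigenvalues_conjTranspose_mul_self_le_sq M i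
  exact (mul_self_le_mul_self_iff (norm_nonneg _) (specNormMat_nonneg M)).mpr hsq

lemma sum_norm_sq_mulVec_le {m n : ℕ} (M : Matrix (Fin m) (Fin n) ℂ) (v : Fin n → ℂ) :
    ∑ k, ‖(M *ᵥ v) k‖ ^ 2 ≤ ‖M‖ ^ 2 * ∑ s, ‖v s‖ ^ 2 := by
  have h := pow_le_pow_left₀ (norm_nonneg _) (l2_opNorm_mulVec M (WithLp.toLp 2 v)) 2
  rw [mul_pow, EuclideanSpace.norm_sq_eq, EuclideanSpace.norm_sq_eq] at h
  simpa using h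

lemma iSup_sqrt_le_mul_iSup_sqrt {ι : Type*} [Finite ι] {f g : ι → ℝ} {c : ℝ} (hc : 0 ≤ c)
    (h : ∀ i, f i ≤ c ^ 2 * g i) : ⨆ i, √(f i) ≤ c * ⨆ i, √(g i) := by
  refine Real.iSup_le (fun i => ?_) (mul_nonneg hc (Real.iSup_nonneg fun _ => Real.sqrt_nonneg _))
  calc √(f i) ≤ √(c ^ 2 * g i) := Real.sqrt_le_sqrt (h i)
    _ = c * √(g i) := by rw [Real.sqrt_mul (sq_nonneg c), Real.sqrt_sq hc]
    _ ≤ c * ⨆ i, √(g i) :=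
      mul_le_mul_of_nonneg_left (le_ciSup (Finite.bddAbove_range fun i => √(g i)) i) hc

section mode3

variable {n1 n2 m n : ℕ} (M : Matrix (Fin m) (Fin n) ℂ) (A : Tensor n1 n2 n)

lemma sum_norm_sq_mode3_le (i : Fin n1) (j : Fin n2) :
    ∑ k, ‖mode3 M A i j k‖ ^ 2 ≤ ‖M‖ ^ 2 * ∑ s, ‖A i j s‖ ^ 2 :=
  sum_norm_sq_mulVec_le M (A i j)

lemma norm1to2_mode3_le : norm1to2 (mode3 M A) ≤ ‖M‖ * norm1to2 A :=
  iSup_sqrt_le_mul_iSup_sqrt (norm_nonneg M) fun j => by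
    rw [Finset.mul_sum]
    exact Finset.sum_le_sum fun i _ => sum_norm_sq_mode3_le M A i j

lemma norm2toInf_mode3_le : norm2toInf (mode3 M A) ≤ ‖M‖ * norm2toInf A :=
  iSup_sqrt_le_mul_iSup_sqrt (norm_nonneg M) fun i => by
    rw [Finset.mul_sum]
    exact Finset.sum_le_sum fun j _ => sum_norm_sq_mode3_le M A i j

lemma normInf2_mode3_le : normInf2 (mode3 M A) ≤ ‖M‖ * normInf2 A := by
  rw [normInf2, normInf2, mul_max_of_nonneg _ _ (norm_nonneg M)]
  exact max_le_max (norm1to2_mode3_le M A) (norm2toInf_mode3_le M A)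

end mode3

lemma mul_conjTranspose_self_apply_self {m n : ℕ} (W : Matrix (Fin m) (Fin n) ℂ) (i : Fin m) :
    (W * Wᴴ) i i = ((∑ j, ‖W i j‖ ^ 2 : ℝ) : ℂ) := by
  push_cast
  simp only [mul_apply, conjTranspose_apply, RCLike.star_def, Complex.mul_conj']

lemma sum_norm_sq_mul_conjTranspose_of_isometry {m n r : ℕ} (A : Matrix (Fin m) (Fin r) ℂ)
    {B : Matrix (Fin n) (Fin r) ℂ} (hB : Bᴴ * B = 1) (i : Fin m) :
    ∑ j, ‖(A * Bᴴ) i j‖ ^ 2 = ∑ s, ‖A i s‖ ^ 2 := by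
  have h : (A * Bᴴ) * (A * Bᴴ)ᴴ = A * Aᴴ := by
    rw [conjTranspose_mul, conjTranspose_conjTranspose, Matrix.mul_assoc, ← Matrix.mul_assoc Bᴴ,
      hB, Matrix.one_mul]
  exact_mod_cast (mul_conjTranspose_self_apply_self _ i).symm.trans
    ((congrFun (congrFun h i) i).trans (mul_conjTranspose_self_apply_self A i))

lemma slice_tprod_hconj {n1 n2 n3 r : ℕ} (U : Tensor n1 r n3) (V : Tensor n2 r n3) (k : Fin n3) :
    slice (tprod U (hconj V)) k = slice U k * (slice V k)ᴴ := by
  ext i j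
  simp [slice, tprod, hconj, mul_apply]

section orthonormal

variable {n1 n2 n3 r : ℕ} (U : Tensor n1 r n3) (V : Tensor n2 r n3)

lemma norm2toInf_tprod_hconj (hV : ∀ k, (slice V k)ᴴ * slice V k = 1) :
    norm2toInf (tprod U (hconj V)) = norm2toInf U := by
  refine iSup_congr fun i => congrArg Real.sqrt ?_
  rw [Finset.sum_comm, Finset.sum_comm (γ := Fin r)]
  refine Finset.sum_congr rfl fun k _ => ?_
  have h := sum_norm_sq_mul_conjTranspose_of_isometry (slice U k) (hV k) i
  rw [← slice_tprod_hconj] at h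
  simpa only [slice, of_apply] using h

lemma norm1to2_tprod_hconj (hU : ∀ k, (slice U k)ᴴ * slice U k = 1) :
    norm1to2 (tprod U (hconj V)) = norm2toInf V := by
  refine iSup_congr fun j => congrArg Real.sqrt ?_
  rw [Finset.sum_comm, Finset.sum_comm (γ := Fin r)]
  refine Finset.sum_congr rfl fun k _ => ?_
  have h := sum_norm_sq_mul_conjTranspose_of_isometry (slice V k) (hU k) j
  rw [← conjTranspose_conjTranspose (slice V k * (slice U k)ᴴ), conjTranspose_mul,
    conjTranspose_conjTranspose, ← slice_tprod_hconj] at h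
  simpa only [slice, conjTranspose_apply, of_apply, norm_star] using h

end orthonormal

lemma norm2toInf_eq_iSup_frobNorm_hconj_tprod_xiB {n r m : ℕ} (U : Tensor n r m) :
    norm2toInf U = ⨆ i, frobNorm (tprod (hconj U) (xiB n m i)) := by
  simp [norm2toInf, frobNorm, tprod, hconj, xiB]

lemma norm2toInf_le_of_frobNorm_hconj_tprod_xiB_le {n r m : ℕ} (U : Tensor n r m) {c : ℝ}
    (hc : 0 ≤ c) (h : ∀ i, frobNorm (tprod (hconj U) (xiB n m i)) ≤ c) : norm2toInf U ≤ c := by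
  rw [norm2toInf_eq_iSup_frobNorm_hconj_tprod_xiB]
  exact Real.iSup_le h hc

lemma normInf2_eq_zero_of_no_rows {n2 n3 : ℕ} (A : Tensor 0 n2 n3) : normInf2 A = 0 := by
  simp [normInf2, norm1to2, norm2toInf]

lemma normInf2_eq_zero_of_no_columns {n1 n3 : ℕ} (A : Tensor n1 0 n3) : normInf2 A = 0 := by
  simp [normInf2, norm1to2, norm2toInf]

lemma sqrt_div_le_sqrt_div_add_div (a : ℝ) {p q : ℝ} (hp : 0 ≤ p) (hq : 0 ≤ q) :
    √(a / p) ≤ √(a / p + a / q) := by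
  rcases le_total a 0 with ha | ha
  · rw [Real.sqrt_eq_zero_of_nonpos (div_nonpos_of_nonpos_of_nonneg ha hp)]
    exact Real.sqrt_nonneg _
  · exact Real.sqrt_le_sqrt (le_add_of_nonneg_right (div_nonneg ha hq))

theorem normInf2_TH_UVH_bound_general {n1 n2 n3 N3 r : ℕ}
    (X : Tensor n1 n2 n3) (T : Matrix (Fin N3) (Fin n3) ℂ)
    (U : Tensor n1 r N3) (S : Tensor r r N3) (V : Tensor n2 r N3) (μ : ℝ)
    (hsvd : IsSkinnyTSVD (mode3 T X) r U S V)
    (hU : ∀ i : Fin n1,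
      frobNorm (tprod (hconj U) (xiB n1 N3 i)) ≤ Real.sqrt (μ * r * N3 / n1))
    (hV : ∀ j : Fin n2,
      frobNorm (tprod (hconj V) (xiB n2 N3 j)) ≤ Real.sqrt (μ * r * N3 / n2)) :
    normInf2 (mode3 Tᴴ (tprod U (hconj V))) ≤
      specNormMat T * Real.sqrt (μ * r * ((n1 : ℝ) + n2) * N3 / ((n1 : ℝ) * n2)) := by
  have hrhs := mul_nonneg (specNormMat_nonneg T)
    (Real.sqrt_nonneg (μ * r * ((n1 : ℝ) + n2) * N3 / ((n1 : ℝ) * n2)))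
  obtain rfl | hn1 := n1.eq_zero_or_pos
  · exact (normInf2_eq_zero_of_no_rows _).trans_le hrhs
  obtain rfl | hn2 := n2.eq_zero_or_pos
  · exact (normInf2_eq_zero_of_no_columns _).trans_le hrhs
  set a : ℝ := μ * r * N3
  have hsplit : μ * r * ((n1 : ℝ) + n2) * N3 / ((n1 : ℝ) * n2) = a / n1 + a / n2 := by
    field_simp
    ring
  have hUrow : norm2toInf U ≤ √(a / n1 + a / n2) :=
    norm2toInf_le_of_frobNorm_hconj_tprod_xiB_le U (Real.sqrt_nonneg _) fun i =>
      (hU i).trans (sqrt_div_le_sqrt_div_add_div a (Nat.cast_nonneg _) (Nat.cast_nonneg _))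
  have hVrow : norm2toInf V ≤ √(a / n1 + a / n2) := by
    refine norm2toInf_le_of_frobNorm_hconj_tprod_xiB_le V (Real.sqrt_nonneg _) fun j => ?_
    rw [add_comm]
    exact (hV j).trans (sqrt_div_le_sqrt_div_add_div a (Nat.cast_nonneg _) (Nat.cast_nonneg _))
  calc normInf2 (mode3 Tᴴ (tprod U (hconj V)))
      ≤ ‖Tᴴ‖ * normInf2 (tprod U (hconj V)) := normInf2_mode3_le Tᴴ _
    _ = ‖T‖ * max (norm2toInf V) (norm2toInf U) := by
      rw [l2_opNorm_conjTranspose, normInf2, norm1to2_tprod_hconj U V hsvd.U_orth,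
        norm2toInf_tprod_hconj U V hsvd.V_orth]
    _ ≤ specNormMat T * √(a / n1 + a / n2) :=
      (mul_le_mul_of_nonneg_left (max_le hVrow hUrow) (norm_nonneg _)).trans
        (mul_le_mul_of_nonneg_right (l2_opNorm_le_specNormMat T) (Real.sqrt_nonneg _))
    _ = _ := by rw [hsplit]

/-- **(∞,2) norm bound of `Tᴴ(U ⋆ Vᴴ)` via the incoherence conditions.** -/
theorem normInf2_TH_UVH_bound {n1 n2 n3 N3 r : ℕ}
    (X : Tensor n1 n2 n3) (T : Matrix (Fin N3) (Fin n3) ℂ)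
    (U : Tensor n1 r N3) (S : Tensor r r N3) (V : Tensor n2 r N3) (μ : ℝ)
    (hT : FullColRank T) (hsvd : IsSkinnyTSVD (mode3 T X) r U S V)
    (hU : ∀ i : Fin n1,
      frobNorm (tprod (hconj U) (xiB n1 N3 i)) ≤ Real.sqrt (μ * r * N3 / n1))
    (hV : ∀ j : Fin n2,
      frobNorm (tprod (hconj V) (xiB n2 N3 j)) ≤ Real.sqrt (μ * r * N3 / n2)) :
    normInf2 (mode3 Tᴴ (tprod U (hconj V))) ≤
      specNormMat T * Real.sqrt (μ * r * ((n1 : ℝ) + n2) * N3 / ((n1 : ℝ) * n2)) :=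
  normInf2_TH_UVH_bound_general X T U S V μ hsvd hU hV

end TC
end
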